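/- arXiv:1312.2169 — 3 statements merged into one kernel-verified Lean document; each statement's English description precedes it below -/
import Mathlib

section
/- Suppose (g12 ≥ g10 or α1 = 0) and (g21 ≥ g20 or α2 = 0). Then J1 + J7 ≥ J8 and J2 + J6 ≥ J8. Consequently, the set of rate pairs {(R1, R2) ∈ ℝ² : R1 ≤ J1 + J3, R2 ≤ J2 + J4, R1 + R2 ≤ J1 + J2 + J5, R1 + R2 ≤ J8} is equal to the set {(R1, R2) ∈ ℝ² : R1 ≤ J1 + J3, R2 ≤ J2 + J4, R1 + R2 ≤ J1 + J2 + J5, R1 + R2 ≤ J8, R1 + R2 ≤ J1 + J7, R1 + R2 ≤ J2 + J6}; i.e., the two additional sum-rate constraints R1 + R2 ≤ J1 + J7 and R1 + R2 ≤ J2 + J6 are redundant. -/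
/-! Since `g ↦ log (1 + g² ρ)` is monotone on `g ≥ 0`, the gains `g12 ≥ g10` and `g21 ≥ g20`
give `J1 ≥ α1 log (1 + g10² ρ11)` and `J2 ≥ α2 log (1 + g20² ρ22)`; adding these to `J7`
resp. `J6` dominates `J8`, so the two extra constraints are implied by `R1 + R2 ≤ J8`. -/

open Real

lemma logb_one_add_sq_mul_le_logb {g g' ρ : ℝ} (hg : 0 ≤ g) (hgg' : g ≤ g') (hρ : 0 ≤ ρ) :
    logb 2 (1 + g ^ 2 * ρ) ≤ logb 2 (1 + g' ^ 2 * ρ) := by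
  have hsq : g ^ 2 ≤ g' ^ 2 := pow_le_pow_left₀ hg hgg' 2
  gcongr
  norm_num

lemma mul_logb_one_add_sq_mul_le {α g g' ρ : ℝ} (hα : 0 ≤ α) (hg : 0 ≤ g) (hρ : 0 ≤ ρ)
    (h : g' ≥ g ∨ α = 0) :
    α * logb 2 (1 + g ^ 2 * ρ) ≤ α * logb 2 (1 + g' ^ 2 * ρ) := by
  rcases h with hgg' | rfl
  · exact mul_le_mul_of_nonneg_left (logb_one_add_sq_mul_le_logb hg hgg' hρ) hα
  · simp

theorem redundant_sum_rate_constraints_general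
    (α1 α2 α3 g10 g20 g12 g21 ρ11 ρ22 ρ10 ρ20 ρ13 ρ23 : ℝ)
    (hα1 : 0 ≤ α1) (hα2 : 0 ≤ α2)
    (hg10 : 0 ≤ g10) (hg20 : 0 ≤ g20)
    (hρ11 : 0 ≤ ρ11) (hρ22 : 0 ≤ ρ22)
    (h1 : g12 ≥ g10 ∨ α1 = 0) (h2 : g21 ≥ g20 ∨ α2 = 0) :
    let J1 := α1 * Real.logb 2 (1 + g12 ^ 2 * ρ11)
    let J2 := α2 * Real.logb 2 (1 + g21 ^ 2 * ρ22)
    let J3 := α3 * Real.logb 2 (1 + g10 ^ 2 * ρ10)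
    let J4 := α3 * Real.logb 2 (1 + g20 ^ 2 * ρ20)
    let J5 := α3 * Real.logb 2 (1 + g10 ^ 2 * ρ10 + g20 ^ 2 * ρ20)
    let ζ := Real.logb 2 (1 + g10 ^ 2 * ρ10 + g20 ^ 2 * ρ20 +
      (g10 * Real.sqrt ρ13 + g20 * Real.sqrt ρ23) ^ 2)
    let J6 := α1 * Real.logb 2 (1 + g10 ^ 2 * ρ11) + α3 * ζ
    let J7 := α2 * Real.logb 2 (1 + g20 ^ 2 * ρ22) + α3 * ζ
    let J8 := α1 * Real.logb 2 (1 + g10 ^ 2 * ρ11) +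
      α2 * Real.logb 2 (1 + g20 ^ 2 * ρ22) + α3 * ζ
    J1 + J7 ≥ J8 ∧ J2 + J6 ≥ J8 ∧
    ({p : ℝ × ℝ | p.1 ≤ J1 + J3 ∧ p.2 ≤ J2 + J4 ∧
        p.1 + p.2 ≤ J1 + J2 + J5 ∧ p.1 + p.2 ≤ J8} =
      {p : ℝ × ℝ | p.1 ≤ J1 + J3 ∧ p.2 ≤ J2 + J4 ∧
        p.1 + p.2 ≤ J1 + J2 + J5 ∧ p.1 + p.2 ≤ J8 ∧
        p.1 + p.2 ≤ J1 + J7 ∧ p.1 + p.2 ≤ J2 + J6}) := by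
  intro J1 J2 J3 J4 J5 ζ J6 J7 J8
  have hJ1 := mul_logb_one_add_sq_mul_le hα1 hg10 hρ11 h1
  have hJ2 := mul_logb_one_add_sq_mul_le hα2 hg20 hρ22 h2
  have hJ17 : J1 + J7 ≥ J8 := by simp only [J1, J7, J8]; linarith
  have hJ26 : J2 + J6 ≥ J8 := by simp only [J2, J6, J8]; linarith
  refine ⟨hJ17, hJ26, Set.ext fun p => ⟨?_, ?_⟩⟩
  · rintro ⟨h₁, h₂, h₃, h₈⟩
    exact ⟨h₁, h₂, h₃, h₈, h₈.trans hJ17, h₈.trans hJ26⟩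
  · rintro ⟨h₁, h₂, h₃, h₈, -, -⟩
    exact ⟨h₁, h₂, h₃, h₈⟩

/-- Corollary 1 (redundancy of the two extra sum-rate constraints):
if `g12 ≥ g10` (or `α1 = 0`) and `g21 ≥ g20` (or `α2 = 0`), then
`J1 + J7 ≥ J8` and `J2 + J6 ≥ J8`, and the achievable rate region of
Theorem 1 is unchanged by adding the constraints `R1 + R2 ≤ J1 + J7`
and `R1 + R2 ≤ J2 + J6`. -/
theorem redundant_sum_rate_constraints
    (α1 α2 α3 g10 g20 g12 g21 ρ11 ρ22 ρ10 ρ20 ρ13 ρ23 : ℝ)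
    (hα1 : 0 ≤ α1) (hα2 : 0 ≤ α2) (hα3 : 0 ≤ α3)
    (hg10 : 0 ≤ g10) (hg20 : 0 ≤ g20) (hg12 : 0 ≤ g12) (hg21 : 0 ≤ g21)
    (hρ11 : 0 ≤ ρ11) (hρ22 : 0 ≤ ρ22) (hρ10 : 0 ≤ ρ10) (hρ20 : 0 ≤ ρ20)
    (hρ13 : 0 ≤ ρ13) (hρ23 : 0 ≤ ρ23)
    (h1 : g12 ≥ g10 ∨ α1 = 0) (h2 : g21 ≥ g20 ∨ α2 = 0) :
    let J1 := α1 * Real.logb 2 (1 + g12 ^ 2 * ρ11)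
    let J2 := α2 * Real.logb 2 (1 + g21 ^ 2 * ρ22)
    let J3 := α3 * Real.logb 2 (1 + g10 ^ 2 * ρ10)
    let J4 := α3 * Real.logb 2 (1 + g20 ^ 2 * ρ20)
    let J5 := α3 * Real.logb 2 (1 + g10 ^ 2 * ρ10 + g20 ^ 2 * ρ20)
    let ζ := Real.logb 2 (1 + g10 ^ 2 * ρ10 + g20 ^ 2 * ρ20 +
      (g10 * Real.sqrt ρ13 + g20 * Real.sqrt ρ23) ^ 2)
    let J6 := α1 * Real.logb 2 (1 + g10 ^ 2 * ρ11) + α3 * ζ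
    let J7 := α2 * Real.logb 2 (1 + g20 ^ 2 * ρ22) + α3 * ζ
    let J8 := α1 * Real.logb 2 (1 + g10 ^ 2 * ρ11) +
      α2 * Real.logb 2 (1 + g20 ^ 2 * ρ22) + α3 * ζ
    J1 + J7 ≥ J8 ∧ J2 + J6 ≥ J8 ∧
    ({p : ℝ × ℝ | p.1 ≤ J1 + J3 ∧ p.2 ≤ J2 + J4 ∧
        p.1 + p.2 ≤ J1 + J2 + J5 ∧ p.1 + p.2 ≤ J8} =
      {p : ℝ × ℝ | p.1 ≤ J1 + J3 ∧ p.2 ≤ J2 + J4 ∧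
        p.1 + p.2 ≤ J1 + J2 + J5 ∧ p.1 + p.2 ≤ J8 ∧
        p.1 + p.2 ≤ J1 + J7 ∧ p.1 + p.2 ≤ J2 + J6}) :=
  redundant_sum_rate_constraints_general α1 α2 α3 g10 g20 g12 g21 ρ11 ρ22 ρ10 ρ20 ρ13 ρ23 hα1 hα2
    hg10 hg20 hρ11 hρ22 h1 h2
end

section
/- Suppose g12 ≤ g10 and g21 ≤ g20. Then J1 + J7 ≥ J1 + J2 + J5 and J2 + J6 ≥ J1 + J2 + J5; hence in this case the sum-rate constraints R1 + R2 ≤ J1 + J7 and R1 + R2 ≤ J2 + J6 are implied by the constraint R1 + R2 ≤ J1 + J2 + J5. -/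
/-!
Both inequalities are monotonicity of `log`: weakening a link gain (`g12 ≤ g10`, `g21 ≤ g20`)
can only lower the rate it supports, and the coherent-combining term
`(g10 √ρ13 + g20 √ρ23)²` inside `ζ` is a nonnegative square, so `J5 ≤ α3 ζ`.
-/

open Real

theorem Real.logb_one_add_sq_mul_le_of_le {b g' g ρ : ℝ} (hb : 1 < b) (hg' : 0 ≤ g')
    (hg : g' ≤ g) (hρ : 0 ≤ ρ) : logb b (1 + g' ^ 2 * ρ) ≤ logb b (1 + g ^ 2 * ρ) := by
  have hsq : g' ^ 2 * ρ ≤ g ^ 2 * ρ :=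
    mul_le_mul_of_nonneg_right (pow_le_pow_left₀ hg' hg 2) hρ
  exact logb_le_logb_of_le hb (by positivity) (by linarith)

theorem Real.logb_le_logb_add_sq {b s : ℝ} (hb : 1 < b) (hs : 0 < s) (x : ℝ) :
    logb b s ≤ logb b (s + x ^ 2) :=
  logb_le_logb_of_le hb hs (le_add_of_nonneg_right (sq_nonneg x))

theorem sum_rate_constraints_case1_general
    (α1 α2 α3 g10 g20 g12 g21 ρ11 ρ22 ρ10 ρ20 ρ13 ρ23 : ℝ)
    (hα1 : 0 ≤ α1) (hα2 : 0 ≤ α2) (hα3 : 0 ≤ α3)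
    (hg12 : 0 ≤ g12) (hg21 : 0 ≤ g21)
    (hρ11 : 0 ≤ ρ11) (hρ22 : 0 ≤ ρ22) (hρ10 : 0 ≤ ρ10) (hρ20 : 0 ≤ ρ20)
    (h1 : g12 ≤ g10) (h2 : g21 ≤ g20) :
    let J1 := α1 * Real.logb 2 (1 + g12 ^ 2 * ρ11)
    let J2 := α2 * Real.logb 2 (1 + g21 ^ 2 * ρ22)
    let J3 := α3 * Real.logb 2 (1 + g10 ^ 2 * ρ10)
    let J4 := α3 * Real.logb 2 (1 + g20 ^ 2 * ρ20)
    let J5 := α3 * Real.logb 2 (1 + g10 ^ 2 * ρ10 + g20 ^ 2 * ρ20)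
    let ζ := Real.logb 2 (1 + g10 ^ 2 * ρ10 + g20 ^ 2 * ρ20 +
      (g10 * Real.sqrt ρ13 + g20 * Real.sqrt ρ23) ^ 2)
    let J6 := α1 * Real.logb 2 (1 + g10 ^ 2 * ρ11) + α3 * ζ
    let J7 := α2 * Real.logb 2 (1 + g20 ^ 2 * ρ22) + α3 * ζ
    let J8 := α1 * Real.logb 2 (1 + g10 ^ 2 * ρ11) +
      α2 * Real.logb 2 (1 + g20 ^ 2 * ρ22) + α3 * ζ
    (J1 + J7 ≥ J1 + J2 + J5 ∧ J2 + J6 ≥ J1 + J2 + J5) ∧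
    ∀ R1 R2 : ℝ, R1 + R2 ≤ J1 + J2 + J5 →
      R1 + R2 ≤ J1 + J7 ∧ R1 + R2 ≤ J2 + J6 := by
  intro J1 J2 _ _ J5 ζ J6 J7 _
  have hJ1 : J1 ≤ α1 * logb 2 (1 + g10 ^ 2 * ρ11) :=
    mul_le_mul_of_nonneg_left (logb_one_add_sq_mul_le_of_le one_lt_two hg12 h1 hρ11) hα1
  have hJ2 : J2 ≤ α2 * logb 2 (1 + g20 ^ 2 * ρ22) :=
    mul_le_mul_of_nonneg_left (logb_one_add_sq_mul_le_of_le one_lt_two hg21 h2 hρ22) hα2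
  have hJ5 : J5 ≤ α3 * ζ :=
    mul_le_mul_of_nonneg_left (logb_le_logb_add_sq one_lt_two (by positivity) _) hα3
  have hJ7 : J1 + J2 + J5 ≤ J1 + J7 := by
    rw [add_assoc]
    exact add_le_add le_rfl (add_le_add hJ2 hJ5)
  have hJ6 : J1 + J2 + J5 ≤ J2 + J6 := by
    rw [add_comm J1 J2, add_assoc]
    exact add_le_add le_rfl (add_le_add hJ1 hJ5)
  exact ⟨⟨hJ7, hJ6⟩, fun R1 R2 h => ⟨h.trans hJ7, h.trans hJ6⟩⟩

/-- If the inter-UE links are weaker than the direct links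
(g12 <= g10 and g21 <= g20), then J1 + J7 >= J1 + J2 + J5 and
J2 + J6 >= J1 + J2 + J5; hence the sum-rate constraints
R1 + R2 <= J1 + J7 and R1 + R2 <= J2 + J6 are implied by
R1 + R2 <= J1 + J2 + J5. -/
theorem sum_rate_constraints_case1
    (α1 α2 α3 g10 g20 g12 g21 ρ11 ρ22 ρ10 ρ20 ρ13 ρ23 : ℝ)
    (hα1 : 0 ≤ α1) (hα2 : 0 ≤ α2) (hα3 : 0 ≤ α3)
    (hg10 : 0 ≤ g10) (hg20 : 0 ≤ g20) (hg12 : 0 ≤ g12) (hg21 : 0 ≤ g21)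
    (hρ11 : 0 ≤ ρ11) (hρ22 : 0 ≤ ρ22) (hρ10 : 0 ≤ ρ10) (hρ20 : 0 ≤ ρ20)
    (hρ13 : 0 ≤ ρ13) (hρ23 : 0 ≤ ρ23)
    (h1 : g12 ≤ g10) (h2 : g21 ≤ g20) :
    let J1 := α1 * Real.logb 2 (1 + g12 ^ 2 * ρ11)
    let J2 := α2 * Real.logb 2 (1 + g21 ^ 2 * ρ22)
    let J3 := α3 * Real.logb 2 (1 + g10 ^ 2 * ρ10)
    let J4 := α3 * Real.logb 2 (1 + g20 ^ 2 * ρ20)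
    let J5 := α3 * Real.logb 2 (1 + g10 ^ 2 * ρ10 + g20 ^ 2 * ρ20)
    let ζ := Real.logb 2 (1 + g10 ^ 2 * ρ10 + g20 ^ 2 * ρ20 +
      (g10 * Real.sqrt ρ13 + g20 * Real.sqrt ρ23) ^ 2)
    let J6 := α1 * Real.logb 2 (1 + g10 ^ 2 * ρ11) + α3 * ζ
    let J7 := α2 * Real.logb 2 (1 + g20 ^ 2 * ρ22) + α3 * ζ
    let J8 := α1 * Real.logb 2 (1 + g10 ^ 2 * ρ11) +
      α2 * Real.logb 2 (1 + g20 ^ 2 * ρ22) + α3 * ζ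
    (J1 + J7 ≥ J1 + J2 + J5 ∧ J2 + J6 ≥ J1 + J2 + J5) ∧
    ∀ R1 R2 : ℝ, R1 + R2 ≤ J1 + J2 + J5 →
      R1 + R2 ≤ J1 + J7 ∧ R1 + R2 ≤ J2 + J6 :=
  sum_rate_constraints_case1_general α1 α2 α3 g10 g20 g12 g21 ρ11 ρ22 ρ10 ρ20 ρ13 ρ23 hα1 hα2 hα3
    hg12 hg21 hρ11 hρ22 hρ10 hρ20 h1 h2
end

section
/- Gallager error exponent at ρ = 0: Let 𝒳 and 𝒴 be nonempty finite types, let p : 𝒳 → ℝ satisfy p(x) > 0 for all x and ∑_x p(x) = 1, and let W : 𝒳 → 𝒴 → ℝ satisfy W(x)(y) > 0 for all x, y and ∑_y W(x)(y) = 1 for each x. Define E0 : ℝ → ℝ by E0(ρ) = −log₂(∑_y (∑_x p(x)·W(x)(y)^{1/(1+ρ)})^{1+ρ}) and define the mutual information I = ∑_x ∑_y p(x)·W(x)(y)·log₂(W(x)(y) / ∑_{x'} p(x')·W(x')(y)). Then E0(0) = 0 and E0 has derivative I at ρ = 0 (in the sense of HasDerivAt). -/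
open Real Finset

/-! At `ρ = 0` every inner sum `∑ₓ p(x) W(x,y)^{1/(1+ρ)}` is the output distribution `q(y)`, so
the Gallager sum is `∑_y q(y) = 1` and `E0(0) = 0`. The derivative of `A(ρ)^{1+ρ}` at `0` is
`A'(0) + A(0) log A(0)`, and here `A'(0) = -∑ₓ p(x) W(x,y) log W(x,y)`; summed over `y` this is
`-(I · log 2)` because `log (W/q) = log W - log q`. Since `-log₂` has derivative `-1/log 2` at `1`,
the chain rule gives `E0'(0) = I`. -/

lemma hasDerivAt_rpow_one_div_one_add {w : ℝ} (hw : 0 < w) :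
    HasDerivAt (fun ρ : ℝ => w ^ (1 / (1 + ρ))) (-(w * log w)) 0 := by
  have hs : HasDerivAt (fun ρ : ℝ => 1 / (1 + ρ)) (-1) 0 := by
    simpa [one_div] using ((hasDerivAt_id (0 : ℝ)).const_add 1).fun_inv (by norm_num)
  refine (hs.const_rpow hw).congr_deriv ?_
  norm_num
  ring

lemma HasDerivAt.rpow_one_add {g : ℝ → ℝ} {g' : ℝ} (hg : HasDerivAt g g' 0) (h0 : 0 < g 0) :
    HasDerivAt (fun ρ => g ρ ^ (1 + ρ)) (g' + g 0 * Real.log (g 0)) 0 := by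
  simpa using hg.rpow ((hasDerivAt_id 0).const_add 1) h0

lemma hasDerivAt_sum_mul_rpow_one_div_one_add {ι : Type*} [Fintype ι] (p w : ι → ℝ)
    (hw : ∀ i, 0 < w i) :
    HasDerivAt (fun ρ : ℝ => ∑ i, p i * w i ^ (1 / (1 + ρ)))
      (-∑ i, p i * (w i * log (w i))) 0 := by
  rw [← sum_neg_distrib]
  exact HasDerivAt.fun_sum fun i _ => by
    simpa using (hasDerivAt_rpow_one_div_one_add (hw i)).const_mul (p i)

section Channel

variable {𝒳 𝒴 : Type*} [Fintype 𝒳] (p : 𝒳 → ℝ) (W : 𝒳 → 𝒴 → ℝ)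

def outputDist (y : 𝒴) : ℝ := ∑ x, p x * W x y

noncomputable def gallagerSum [Fintype 𝒴] (ρ : ℝ) : ℝ :=
  ∑ y, (∑ x, p x * W x y ^ (1 / (1 + ρ))) ^ (1 + ρ)

variable {p W}

lemma outputDist_pos [Nonempty 𝒳] (hp : ∀ x, 0 < p x) (hW : ∀ x y, 0 < W x y) (y : 𝒴) :
    0 < outputDist p W y :=
  sum_pos (fun x _ => mul_pos (hp x) (hW x y)) univ_nonempty

variable [Fintype 𝒴]

lemma gallagerSum_zero (hps : ∑ x, p x = 1) (hWs : ∀ x, ∑ y, W x y = 1) :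
    gallagerSum p W 0 = 1 := by
  simp only [gallagerSum, add_zero, div_one, rpow_one]
  rw [sum_comm]
  simp only [← mul_sum, hWs, mul_one, hps]

lemma hasDerivAt_gallagerSum (hW : ∀ x y, 0 < W x y) (hq : ∀ y, 0 < outputDist p W y) :
    HasDerivAt (gallagerSum p W)
      (∑ y, (outputDist p W y * log (outputDist p W y)
        - ∑ x, p x * (W x y * log (W x y)))) 0 := by
  refine HasDerivAt.fun_sum fun y _ => ?_
  have hA0 : ∑ x, p x * W x y ^ (1 / (1 + (0 : ℝ))) = outputDist p W y := by
    simp [outputDist]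
  have hA := (hasDerivAt_sum_mul_rpow_one_div_one_add p (W · y) (hW · y)).rpow_one_add
    (by rw [hA0]; exact hq y)
  refine hA.congr_deriv ?_
  rw [hA0]
  ring

lemma sum_sum_mul_log_div_outputDist (hW : ∀ x y, 0 < W x y) (hq : ∀ y, 0 < outputDist p W y) :
    ∑ x, ∑ y, p x * W x y * log (W x y / outputDist p W y) =
      -∑ y, (outputDist p W y * log (outputDist p W y) - ∑ x, p x * (W x y * log (W x y))) := by
  rw [sum_comm, ← sum_neg_distrib]
  refine sum_congr rfl fun y _ => ?_
  rw [outputDist, sum_mul, ← sum_sub_distrib, ← sum_neg_distrib]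
  refine sum_congr rfl fun x _ => ?_
  rw [← outputDist, log_div (hW x y).ne' (hq y).ne']
  ring

end Channel

theorem gallager_exponent_at_zero_general
    {𝒳 𝒴 : Type*} [Fintype 𝒳] [Fintype 𝒴] [Nonempty 𝒳]
    (p : 𝒳 → ℝ) (W : 𝒳 → 𝒴 → ℝ)
    (hp : ∀ x, 0 < p x) (hps : ∑ x, p x = 1)
    (hW : ∀ x y, 0 < W x y) (hWs : ∀ x, ∑ y, W x y = 1) :
    let E0 : ℝ → ℝ := fun ρ =>
      - Real.logb 2 (∑ y, (∑ x, p x * (W x y) ^ (1 / (1 + ρ))) ^ (1 + ρ))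
    let I : ℝ := ∑ x, ∑ y, p x * W x y *
      Real.logb 2 (W x y / ∑ x', p x' * W x' y)
    E0 0 = 0 ∧ HasDerivAt E0 I 0 := by
  intro E0 I
  have hq := outputDist_pos hp hW
  have hF0 := gallagerSum_zero hps hWs
  refine ⟨show -logb 2 (gallagerSum p W 0) = 0 by rw [hF0, logb_one, neg_zero], ?_⟩
  have hE0 := (((hasDerivAt_gallagerSum hW hq).log (by rw [hF0]; exact one_ne_zero)).div_const
    (log 2)).neg
  refine hE0.congr_deriv ?_
  rw [hF0, div_one, ← neg_div, ← sum_sum_mul_log_div_outputDist hW hq, sum_div]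
  simp only [sum_div, mul_div_assoc]
  rfl

/-- Gallager error exponent at ρ = 0: for a discrete memoryless channel W with
input distribution p (all strictly positive), the Gallager function
E0(ρ) = −log₂ ∑_y (∑_x p(x)·W(x,y)^{1/(1+ρ)})^{1+ρ} satisfies E0(0) = 0 and
E0'(0) = I, the mutual information in bits. -/
theorem gallager_exponent_at_zero
    {𝒳 𝒴 : Type*} [Fintype 𝒳] [Fintype 𝒴] [Nonempty 𝒳] [Nonempty 𝒴]
    (p : 𝒳 → ℝ) (W : 𝒳 → 𝒴 → ℝ)
    (hp : ∀ x, 0 < p x) (hps : ∑ x, p x = 1)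
    (hW : ∀ x y, 0 < W x y) (hWs : ∀ x, ∑ y, W x y = 1) :
    let E0 : ℝ → ℝ := fun ρ =>
      - Real.logb 2 (∑ y, (∑ x, p x * (W x y) ^ (1 / (1 + ρ))) ^ (1 + ρ))
    let I : ℝ := ∑ x, ∑ y, p x * W x y *
      Real.logb 2 (W x y / ∑ x', p x' * W x' y)
    E0 0 = 0 ∧ HasDerivAt E0 I 0 :=
  gallager_exponent_at_zero_general p W hp hps hW hWs
end
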